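/- Corollary of the generalized Rolle inequality: under the same sequential-ordering hypothesis on intervals I₀,…,I_m, for any real polynomial Q, Σ_{i=0}^m N(Q^{(i)}; I_i) ≤ deg Q, where N(f;A) is the number of distinct zeros of f in A. -/

import Mathlib

/-!
Count the zeros of `P` in a convex set `S` with multiplicity at interior points and once at
the endpoints. Rolle's theorem between consecutive zeros, together with the fact that an
interior zero of multiplicity `μ` is a zero of `P'` of multiplicity at least `μ - 1`, bounds
this count by one more than the number of zeros of `P'` in the interior of `S` (with
multiplicity); for constant `P` the count is zero.

Let `H_k` be the convex hull of `I₀ ∪ ⋯ ∪ I_{k-1}`. Since `I_k` misses the interior of `H_k`,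
the zeros of `Q^(k)` in the interior of `H_k` and those in `I_k` are counted separately by the
count of `Q^(k)` on `H_{k+1}`. Hence the inequality
`∑_{i<k} N(Q^(i); I_i) + deg Q^(k) ≤ deg Q + #(zeros of Q^(k) in the interior of H_k)`
passes from `k` to `k + 1`, and at `k = m + 1` the last term is at most `deg Q^(m+1)`.
-/

open Polynomial

open scoped Classical in
/-- `N(Q;A)`: number of distinct zeros of `Q` in `A`. -/
noncomputable def nZeros (Q : Polynomial ℝ) (A : Set ℝ) : ℕ :=
  (Q.roots.toFinset.filter (fun x => x ∈ A)).card

open Finset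
open scoped Classical

noncomputable def rootsIn (P : ℝ[X]) (A : Set ℝ) : Multiset ℝ :=
  P.roots.filter (· ∈ A)

section RootsIn

variable (P : ℝ[X]) {A B : Set ℝ}

theorem count_rootsIn {x : ℝ} (hx : x ∈ A) : (rootsIn P A).count x = P.rootMultiplicity x := by
  rw [rootsIn, Multiset.count_filter_of_pos hx, count_roots]

theorem nZeros_eq_card_toFinset_rootsIn : nZeros P A = #(rootsIn P A).toFinset := by
  rw [nZeros, rootsIn, Multiset.toFinset_filter]

theorem rootsIn_mono (h : A ⊆ B) : rootsIn P A ≤ rootsIn P B :=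
  Multiset.monotone_filter_right _ fun _ hx => h hx

theorem nZeros_mono (h : A ⊆ B) : nZeros P A ≤ nZeros P B :=
  card_le_card <| monotone_filter_right _ fun _ _ hx => h hx

theorem nZeros_le_card_rootsIn : nZeros P A ≤ Multiset.card (rootsIn P A) := by
  rw [nZeros_eq_card_toFinset_rootsIn]
  exact Multiset.toFinset_card_le _

theorem card_rootsIn_le_natDegree : Multiset.card (rootsIn P A) ≤ P.natDegree :=
  (Multiset.card_le_card (Multiset.filter_le _ _)).trans (card_roots' P)

theorem rootsIn_union (h : Disjoint A B) : rootsIn P (A ∪ B) = rootsIn P A + rootsIn P B := by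
  ext x
  by_cases hA : x ∈ A
  · simp [rootsIn, hA, h.notMem_of_mem_left hA]
  · simp [rootsIn, Multiset.count_filter, hA]

theorem nZeros_union (h : Disjoint A B) : nZeros P (A ∪ B) = nZeros P A + nZeros P B := by
  rw [nZeros_eq_card_toFinset_rootsIn, rootsIn_union P h, Multiset.toFinset_add,
    card_union_of_disjoint, nZeros_eq_card_toFinset_rootsIn, nZeros_eq_card_toFinset_rootsIn]
  rw [disjoint_left]
  simp only [Multiset.mem_toFinset, rootsIn, Multiset.mem_filter]
  exact fun x hA hB => h.notMem_of_mem_left hA.2 hB.2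

end RootsIn

theorem Multiset.sum_count_le_card {α : Type*} [DecidableEq α] (s : Finset α) (m : Multiset α) :
    ∑ x ∈ s, m.count x ≤ Multiset.card m :=
  calc ∑ x ∈ s, m.count x ≤ ∑ x ∈ s ∪ m.toFinset, m.count x :=
        sum_le_sum_of_subset subset_union_left
    _ = Multiset.card m :=
        sum_count_eq_card fun _ ha => mem_union_right _ (Multiset.mem_toFinset.2 ha)

noncomputable def mixedRootCount (P : ℝ[X]) (S : Set ℝ) : ℕ :=
  Multiset.card (rootsIn P (interior S)) + nZeros P (S \ interior S)

section MixedRootCount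

variable (P : ℝ[X]) {S : Set ℝ}

theorem card_rootsIn_add_nZeros_le_mixedRootCount {U A : Set ℝ} (hU : U ⊆ interior S)
    (hA : A ⊆ S) (hUA : Disjoint U A) :
    Multiset.card (rootsIn P U) + nZeros P A ≤ mixedRootCount P S := by
  have hAint : Disjoint U (A ∩ interior S) := hUA.mono_right Set.inter_subset_left
  calc Multiset.card (rootsIn P U) + nZeros P A
      = Multiset.card (rootsIn P U) + nZeros P (A ∩ interior S) + nZeros P (A \ interior S) := by
        rw [add_assoc, ← nZeros_union P Set.disjoint_sdiff_inter.symm, Set.inter_union_sdiff]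
    _ ≤ Multiset.card (rootsIn P (U ∪ A ∩ interior S)) + nZeros P (S \ interior S) := by
        rw [rootsIn_union P hAint, Multiset.card_add]
        gcongr
        · exact nZeros_le_card_rootsIn P
        · exact nZeros_mono P (Set.sdiff_subset_sdiff_left hA)
    _ ≤ mixedRootCount P S :=
        Nat.add_le_add_right (Multiset.card_le_card <| rootsIn_mono P <|
          Set.union_subset hU Set.inter_subset_right) _

theorem nZeros_le_card_toFinset_rootsIn_derivative_sdiff_succ (hS : S.OrdConnected) :
    nZeros P S ≤
      #((rootsIn (derivative P) (interior S)).toFinset \ (rootsIn P S).toFinset) + 1 := by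
  rcases eq_or_ne (derivative P) 0 with hP' | hP'
  · rw [eq_C_of_derivative_eq_zero hP']
    simp [nZeros]
  rw [nZeros_eq_card_toFinset_rootsIn]
  refine card_le_sdiff_of_interleaved fun x hx y hy hxy _ => ?_
  simp only [rootsIn, Multiset.mem_toFinset, Multiset.mem_filter, mem_roots'] at hx hy
  obtain ⟨z, hz, hz0⟩ := exists_deriv_eq_zero hxy P.continuousOn
    (hx.1.2.eq_zero.trans hy.1.2.eq_zero.symm)
  have hzS : z ∈ interior S :=
    interior_maximal (fun w hw => hS.out hx.2 hy.2 (Set.Ioo_subset_Icc_self hw)) isOpen_Ioo hz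
  refine ⟨z, ?_, hz⟩
  simp only [rootsIn, Multiset.mem_toFinset, Multiset.mem_filter, mem_roots hP', IsRoot,
    ← P.deriv]
  exact ⟨hz0, hzS⟩

theorem mixedRootCount_le_card_rootsIn_derivative_succ (hS : S.OrdConnected) :
    mixedRootCount P S ≤ Multiset.card (rootsIn (derivative P) (interior S)) + 1 := by
  set M := rootsIn (derivative P) (interior S)
  set Z := (rootsIn P (interior S)).toFinset
  set T := M.toFinset \ (rootsIn P S).toFinset
  have hZ : ∀ x ∈ Z, x ∈ interior S := fun _ hx =>
    (Multiset.mem_filter.1 (Multiset.mem_toFinset.1 hx)).2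
  have hinterior : Multiset.card (rootsIn P (interior S)) ≤ ∑ x ∈ Z, M.count x + #Z :=
    calc Multiset.card (rootsIn P (interior S)) = ∑ x ∈ Z, P.rootMultiplicity x := by
          rw [← Multiset.toFinset_sum_count_eq]
          exact sum_congr rfl fun x hx => count_rootsIn P (hZ x hx)
      _ ≤ ∑ x ∈ Z, (M.count x + 1) := sum_le_sum fun x hx => by
          have := rootMultiplicity_sub_one_le_derivative_rootMultiplicity P x
          rw [count_rootsIn _ (hZ x hx)]
          omega
      _ = ∑ x ∈ Z, M.count x + #Z := by rw [sum_add_distrib, card_eq_sum_ones]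
  have hzeros : #Z + nZeros P (S \ interior S) = nZeros P S := by
    rw [← nZeros_eq_card_toFinset_rootsIn, ← nZeros_union P Set.disjoint_sdiff_right,
      Set.union_sdiff_cancel interior_subset]
  have hT : #T ≤ ∑ x ∈ T, M.count x := by
    rw [card_eq_sum_ones]
    exact sum_le_sum fun x hx => Multiset.one_le_count_iff_mem.2
      (Multiset.mem_toFinset.1 (mem_sdiff.1 hx).1)
  have hZT : Disjoint Z T := disjoint_sdiff.mono_left <|
    Multiset.toFinset_subset.2 <| Multiset.subset_of_le <| rootsIn_mono P interior_subset
  have hM := Multiset.sum_count_le_card (Z ∪ T) M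
  rw [sum_union hZT] at hM
  have hrolle : nZeros P S ≤ #T + 1 :=
    nZeros_le_card_toFinset_rootsIn_derivative_sdiff_succ P hS
  rw [mixedRootCount]
  omega

theorem mixedRootCount_add_natDegree_derivative_le (hS : S.OrdConnected) :
    mixedRootCount P S + (derivative P).natDegree ≤
      Multiset.card (rootsIn (derivative P) (interior S)) + P.natDegree := by
  rcases Nat.eq_zero_or_pos P.natDegree with h0 | hpos
  · rw [eq_C_of_natDegree_eq_zero h0]
    simp [mixedRootCount, rootsIn, nZeros]
  · have := natDegree_derivative P
    have := mixedRootCount_le_card_rootsIn_derivative_succ P hS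
    omega

end MixedRootCount

theorem sum_nZeros_iterate_derivative_add_natDegree_le (I : ℕ → Set ℝ) (Q : ℝ[X]) (k : ℕ)
    (hdisj : ∀ j < k, Disjoint (I j) (interior (convexHull ℝ (⋃ i < j, I i)))) :
    ∑ i ∈ range k, nZeros (derivative^[i] Q) (I i) + (derivative^[k] Q).natDegree ≤
      Q.natDegree +
        Multiset.card (rootsIn (derivative^[k] Q) (interior (convexHull ℝ (⋃ i < k, I i)))) := by
  induction k with
  | zero => simp
  | succ k ih =>
    have hsub : convexHull ℝ (⋃ i < k, I i) ⊆ convexHull ℝ (⋃ i < k + 1, I i) :=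
      convexHull_mono (by rw [Set.biUnion_lt_succ]; exact Set.subset_union_left)
    have hIk : I k ⊆ convexHull ℝ (⋃ i < k + 1, I i) := by
      rw [Set.biUnion_lt_succ]
      exact Set.subset_union_right.trans (subset_convexHull ℝ _)
    have hcount := card_rootsIn_add_nZeros_le_mixedRootCount (derivative^[k] Q)
      (interior_mono hsub) hIk (hdisj k (lt_add_one k)).symm
    have hrolle := mixedRootCount_add_natDegree_derivative_le (derivative^[k] Q)
      (convex_convexHull ℝ (⋃ i < k + 1, I i)).ordConnected
    have := ih fun j hj => hdisj j (hj.trans (lt_add_one k))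
    rw [sum_range_succ, Function.iterate_succ_apply']
    omega

theorem sum_zeros_derivatives_le_degree_general
    (m : ℕ) (I : ℕ → Set ℝ)
    (horder : ∀ k, 1 ≤ k → k ≤ m →
      I k ∩ interior (convexHull ℝ (⋃ i < k, I i)) = ∅)
    (Q : Polynomial ℝ) :
    ∑ i ∈ Finset.range (m + 1), nZeros (derivative^[i] Q) (I i) ≤ Q.natDegree := by
  have hdisj : ∀ k < m + 1, Disjoint (I k) (interior (convexHull ℝ (⋃ i < k, I i))) := by
    rintro (_ | k) hk
    · simp
    · exact Set.disjoint_iff_inter_eq_empty.2 (horder (k + 1) (by omega) (by omega))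
  have := sum_nZeros_iterate_derivative_add_natDegree_le I Q (m + 1) hdisj
  have := card_rootsIn_le_natDegree (derivative^[m + 1] Q)
    (A := interior (convexHull ℝ (⋃ i < m + 1, I i)))
  omega

/-- Corollary of the generalized Rolle inequality: for sequentially-ordered
intervals `I₀,…,I_m`, the total number of distinct zeros of the successive
derivatives of `Q` in the corresponding intervals is at most `deg Q`. -/
theorem sum_zeros_derivatives_le_degree
    (m : ℕ) (I : ℕ → Set ℝ) (hI : ∀ k ≤ m, (I k).OrdConnected)
    (horder : ∀ k, 1 ≤ k → k ≤ m →
      I k ∩ interior (convexHull ℝ (⋃ i < k, I i)) = ∅)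
    (Q : Polynomial ℝ) (hQ : Q ≠ 0) :
    ∑ i ∈ Finset.range (m + 1), nZeros (derivative^[i] Q) (I i) ≤ Q.natDegree :=
  sum_zeros_derivatives_le_degree_general m I horder Q
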